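/- For any μ ∈ 𝒫(X), the optimal regularized Q-function Q^{reg,*}_μ (the unique bounded fixed point of L_μ) satisfies |Q^{reg,*}_μ(x,u) − Q^{reg,*}_μ(x̂,û)| ≤ (Q_Lip + L_reg)(1_{x≠x̂} + ‖u − û‖₁) for all x, x̂ ∈ X and u, û ∈ U, where Q_Lip := L1/(1 − βK1/2). (Joint Lipschitz continuity of H1(μ), proved inside Lemma 3.) -/
import Mathlib


namespace MFG

open Finset

def IsProb {E : Type*} [Fintype E] (μ : E → ℝ) : Prop :=
  (∀ e, 0 ≤ μ e) ∧ ∑ e, μ e = 1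

def l1 {E : Type*} [Fintype E] (μ ν : E → ℝ) : ℝ :=
  ∑ e, |μ e - ν e|

def ind {E : Type*} [DecidableEq E] (x y : E) : ℝ :=
  if x = y then 0 else 1

def RewardLip {X A : Type*} [Fintype X] [Fintype A] [DecidableEq X] [DecidableEq A]
    (r : X → A → (X → ℝ) → ℝ) (L1 : ℝ) : Prop :=
  ∀ x x' a a' μ μ', IsProb μ → IsProb μ' →
    |r x a μ - r x' a' μ'| ≤ L1 * (ind x x' + 2 * ind a a' + l1 μ μ')

def KernelLip {X A : Type*} [Fintype X] [Fintype A] [DecidableEq X] [DecidableEq A]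
    (p : X → A → (X → ℝ) → X → ℝ) (K1 : ℝ) : Prop :=
  ∀ x x' a a' μ μ', IsProb μ → IsProb μ' →
    l1 (p x a μ) (p x' a' μ') ≤ K1 * (ind x x' + 2 * ind a a' + l1 μ μ')

def IsKernel {X A : Type*} [Fintype X] [Fintype A]
    (p : X → A → (X → ℝ) → X → ℝ) : Prop :=
  ∀ x a μ, IsProb μ → IsProb (p x a μ)

def RewardNonneg {X A : Type*} [Fintype X] [Fintype A]
    (r : X → A → (X → ℝ) → ℝ) : Prop :=
  ∀ x a μ, IsProb μ → 0 ≤ r x a μ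

def OmegaLip {A : Type*} [Fintype A] (Ω : (A → ℝ) → ℝ) (Lreg : ℝ) : Prop :=
  ∀ u v, IsProb u → IsProb v → |Ω u - Ω v| ≤ Lreg * l1 u v

def StrongConvex {A : Type*} [Fintype A] (Ω : (A → ℝ) → ℝ)
    (DΩ : (A → ℝ) → (A → ℝ)) (ρ : ℝ) : Prop :=
  ∀ u v, IsProb u → IsProb v →
    Ω u + (∑ a, DΩ u a * (v a - u a)) + ρ / 2 * (l1 u v) ^ 2 ≤ Ω v

noncomputable def Tbell {X A : Type*} [Fintype X] [Fintype A]
    (r : X → A → (X → ℝ) → ℝ) (p : X → A → (X → ℝ) → X → ℝ)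
    (Ω : (A → ℝ) → ℝ) (β : ℝ) (μ : X → ℝ) (v : X → ℝ) (x : X) : ℝ :=
  ⨆ u : {w : A → ℝ // IsProb w},
    ((∑ a, r x a μ * u.1 a) - Ω u.1 + β * ∑ y, v y * (∑ a, p x a μ y * u.1 a))

noncomputable def Qmax {X A : Type*} [Fintype A] (Q : X → (A → ℝ) → ℝ) (y : X) : ℝ :=
  ⨆ u : {w : A → ℝ // IsProb w}, Q y u.1

noncomputable def Lbell {X A : Type*} [Fintype X] [Fintype A]
    (r : X → A → (X → ℝ) → ℝ) (p : X → A → (X → ℝ) → X → ℝ)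
    (Ω : (A → ℝ) → ℝ) (β : ℝ) (μ : X → ℝ) (Q : X → (A → ℝ) → ℝ)
    (x : X) (u : A → ℝ) : ℝ :=
  (∑ a, r x a μ * u a) - Ω u + β * ∑ y, Qmax Q y * (∑ a, p x a μ y * u a)

def BddFixedPoint {X A : Type*} [Fintype X] [Fintype A]
    (r : X → A → (X → ℝ) → ℝ) (p : X → A → (X → ℝ) → X → ℝ)
    (Ω : (A → ℝ) → ℝ) (β : ℝ) (μ : X → ℝ) (Q : X → (A → ℝ) → ℝ) : Prop :=
  (∃ C, ∀ x u, IsProb u → |Q x u| ≤ C) ∧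
  (∀ x u, IsProb u → Q x u = Lbell r p Ω β μ Q x u)

lemma key {E : Type*} [Fintype E] [Nonempty E] (g P P' : E → ℝ) (M : ℝ)
    (hM : ∀ e e', |g e - g e'| ≤ 2 * M)
    (hsum : ∑ e, P e = ∑ e, P' e) :
    |∑ e, g e * (P e - P' e)| ≤ M * l1 P P' := by
  obtain ⟨e0⟩ := ‹Nonempty E›
  have hSne : (Finset.univ.image g).Nonempty :=
    ⟨g e0, Finset.mem_image_of_mem _ (Finset.mem_univ e0)⟩
  set c := ((Finset.univ.image g).max' hSne + (Finset.univ.image g).min' hSne) / 2 with hcdef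
  obtain ⟨emax, -, hmax⟩ := Finset.mem_image.mp ((Finset.univ.image g).max'_mem hSne)
  obtain ⟨emin, -, hmin⟩ := Finset.mem_image.mp ((Finset.univ.image g).min'_mem hSne)
  have hdiam : (Finset.univ.image g).max' hSne - (Finset.univ.image g).min' hSne ≤ 2 * M := by
    have h := hM emax emin
    rw [hmax, hmin] at h
    exact (le_abs_self _).trans h
  have hc : ∀ e, |g e - c| ≤ M := by
    intro e
    have h1 : g e ≤ (Finset.univ.image g).max' hSne :=
      Finset.le_max' _ _ (Finset.mem_image_of_mem _ (Finset.mem_univ e))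
    have h2 : (Finset.univ.image g).min' hSne ≤ g e :=
      Finset.min'_le _ _ (Finset.mem_image_of_mem _ (Finset.mem_univ e))
    rw [abs_le]; constructor <;> [linarith; linarith]
  have h0 : ∑ e, (P e - P' e) = 0 := by
    rw [Finset.sum_sub_distrib, hsum, sub_self]
  have heq : ∑ e, g e * (P e - P' e) = ∑ e, (g e - c) * (P e - P' e) := by
    have : ∑ e, (g e - c) * (P e - P' e)
        = (∑ e, g e * (P e - P' e)) - c * ∑ e, (P e - P' e) := by
      rw [Finset.mul_sum, ← Finset.sum_sub_distrib]
      exact Finset.sum_congr rfl fun e _ => by ring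
    rw [this, h0, mul_zero, sub_zero]
  rw [heq]
  calc |∑ e, (g e - c) * (P e - P' e)| ≤ ∑ e, |(g e - c) * (P e - P' e)| :=
        Finset.abs_sum_le_sum_abs _ _
    _ ≤ ∑ e, M * |P e - P' e| := Finset.sum_le_sum fun e _ => by
        rw [abs_mul]; exact mul_le_mul_of_nonneg_right (hc e) (abs_nonneg _)
    _ = M * l1 P P' := by rw [l1, Finset.mul_sum]

lemma l1_self {E : Type*} [Fintype E] (u : E → ℝ) : l1 u u = 0 := by simp [l1]

lemma l1_nonneg {E : Type*} [Fintype E] (u v : E → ℝ) : 0 ≤ l1 u v :=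
  Finset.sum_nonneg fun _ _ => abs_nonneg _

lemma ind_self {E : Type*} [DecidableEq E] (x : E) : ind x x = 0 := if_pos rfl

lemma ind_nonneg {E : Type*} [DecidableEq E] (x y : E) : 0 ≤ ind x y := by
  unfold ind; split <;> norm_num

lemma ind_le_one {E : Type*} [DecidableEq E] (x y : E) : ind x y ≤ 1 := by
  unfold ind; split <;> norm_num

lemma step {X A : Type*} [Fintype X] [Fintype A] [Nonempty X] [Nonempty A]
    [DecidableEq X] [DecidableEq A]
    (r : X → A → (X → ℝ) → ℝ) (p : X → A → (X → ℝ) → X → ℝ)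
    (L1 K1 : ℝ) (hL1 : 0 ≤ L1) (hK1 : 0 ≤ K1)
    (hr : RewardLip r L1) (hp_prob : IsKernel p) (hp : KernelLip p K1)
    (Ω : (A → ℝ) → ℝ) (Lreg : ℝ) (hΩ : OmegaLip Ω Lreg)
    (β : ℝ) (hβ0 : 0 ≤ β)
    (μ : X → ℝ) (hμ : IsProb μ)
    (V : X → ℝ) (D : ℝ) (hD0 : 0 ≤ D) (hDV : ∀ y y', |V y - V y'| ≤ D)
    (x x' : X) (u u' : A → ℝ) (hu : IsProb u) (hu' : IsProb u') :
    |((∑ a, r x a μ * u a) - Ω u + β * ∑ y, V y * (∑ a, p x a μ y * u a)) -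
     ((∑ a, r x' a μ * u' a) - Ω u' + β * ∑ y, V y * (∑ a, p x' a μ y * u' a))|
      ≤ (L1 + β * K1 * D / 2) * (ind x x' + l1 u u') + Lreg * l1 u u' := by
  have hA1 : ∑ a, u a = ∑ a, u' a := by rw [hu.2, hu'.2]
  have hlμ : l1 μ μ = 0 := l1_self μ
  -- reward part
  have hR : |(∑ a, r x a μ * u a) - ∑ a, r x' a μ * u' a| ≤ L1 * (ind x x' + l1 u u') := by
    have hsplit : (∑ a, r x a μ * u a) - ∑ a, r x' a μ * u' a
        = (∑ a, (r x a μ - r x' a μ) * u a) + ∑ a, r x' a μ * (u a - u' a) := by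
      rw [← Finset.sum_add_distrib, ← Finset.sum_sub_distrib]
      exact Finset.sum_congr rfl fun a _ => by ring
    have h1 : |∑ a, (r x a μ - r x' a μ) * u a| ≤ L1 * ind x x' := by
      calc |∑ a, (r x a μ - r x' a μ) * u a| ≤ ∑ a, |(r x a μ - r x' a μ) * u a| :=
            Finset.abs_sum_le_sum_abs _ _
        _ ≤ ∑ a, (L1 * ind x x') * u a := Finset.sum_le_sum fun a _ => by
            rw [abs_mul, abs_of_nonneg (hu.1 a)]
            refine mul_le_mul_of_nonneg_right ?_ (hu.1 a)
            have h := hr x x' a a μ μ hμ hμ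
            rw [ind_self, hlμ] at h
            calc |r x a μ - r x' a μ| ≤ L1 * (ind x x' + 2 * 0 + 0) := h
              _ = L1 * ind x x' := by ring
        _ = L1 * ind x x' := by rw [← Finset.mul_sum, hu.2, mul_one]
    have h2 : |∑ a, r x' a μ * (u a - u' a)| ≤ L1 * l1 u u' := by
      refine key _ _ _ _ (fun a a' => ?_) hA1
      have h := hr x' x' a a' μ μ hμ hμ
      rw [ind_self, hlμ] at h
      have := ind_le_one a a'
      nlinarith
    calc |(∑ a, r x a μ * u a) - ∑ a, r x' a μ * u' a|
        = |(∑ a, (r x a μ - r x' a μ) * u a) + ∑ a, r x' a μ * (u a - u' a)| := by rw [hsplit]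
      _ ≤ |∑ a, (r x a μ - r x' a μ) * u a| + |∑ a, r x' a μ * (u a - u' a)| := abs_add_le _ _
      _ ≤ L1 * ind x x' + L1 * l1 u u' := add_le_add h1 h2
      _ = L1 * (ind x x' + l1 u u') := by ring
  -- V part
  have hV : |(∑ y, V y * (∑ a, p x a μ y * u a)) - ∑ y, V y * (∑ a, p x' a μ y * u' a)|
      ≤ K1 * D / 2 * (ind x x' + l1 u u') := by
    have hsplit : (∑ y, V y * (∑ a, p x a μ y * u a)) - ∑ y, V y * (∑ a, p x' a μ y * u' a)
        = (∑ a, u a * (∑ y, V y * (p x a μ y - p x' a μ y)))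
          + ∑ a, (∑ y, V y * p x' a μ y) * (u a - u' a) := by
      simp only [Finset.mul_sum, Finset.sum_mul, ← Finset.sum_sub_distrib,
        ← Finset.sum_add_distrib]
      rw [Finset.sum_comm]
      exact Finset.sum_congr rfl fun a _ => Finset.sum_congr rfl fun y _ => by ring
    have h1 : |∑ a, u a * (∑ y, V y * (p x a μ y - p x' a μ y))| ≤ K1 * D / 2 * ind x x' := by
      calc |∑ a, u a * (∑ y, V y * (p x a μ y - p x' a μ y))|
          ≤ ∑ a, |u a * (∑ y, V y * (p x a μ y - p x' a μ y))| := Finset.abs_sum_le_sum_abs _ _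
        _ ≤ ∑ a, u a * (K1 * D / 2 * ind x x') := Finset.sum_le_sum fun a _ => by
            rw [abs_mul, abs_of_nonneg (hu.1 a)]
            refine mul_le_mul_of_nonneg_left ?_ (hu.1 a)
            have hineq : |∑ y, V y * (p x a μ y - p x' a μ y)| ≤ D / 2 * l1 (p x a μ) (p x' a μ) :=
              key V _ _ (D / 2) (fun y y' => by have := hDV y y'; linarith)
                (by rw [(hp_prob x a μ hμ).2, (hp_prob x' a μ hμ).2])
            have hker := hp x x' a a μ μ hμ hμ
            rw [ind_self, hlμ] at hker
            have hD2 : (0:ℝ) ≤ D / 2 := by linarith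
            calc |∑ y, V y * (p x a μ y - p x' a μ y)| ≤ D / 2 * l1 (p x a μ) (p x' a μ) := hineq
              _ ≤ D / 2 * (K1 * (ind x x' + 2 * 0 + 0)) := mul_le_mul_of_nonneg_left hker hD2
              _ = K1 * D / 2 * ind x x' := by ring
        _ = K1 * D / 2 * ind x x' := by rw [← Finset.sum_mul, hu.2, one_mul]
    have h2 : |∑ a, (∑ y, V y * p x' a μ y) * (u a - u' a)| ≤ K1 * D / 2 * l1 u u' := by
      refine key _ _ _ _ (fun a a' => ?_) hA1
      have heq2 : (∑ y, V y * p x' a μ y) - ∑ y, V y * p x' a' μ y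
          = ∑ y, V y * (p x' a μ y - p x' a' μ y) := by
        rw [← Finset.sum_sub_distrib]
        exact Finset.sum_congr rfl fun y _ => by ring
      rw [heq2]
      have hineq : |∑ y, V y * (p x' a μ y - p x' a' μ y)| ≤ D / 2 * l1 (p x' a μ) (p x' a' μ) :=
        key V _ _ (D / 2) (fun y y' => by have := hDV y y'; linarith)
          (by rw [(hp_prob x' a μ hμ).2, (hp_prob x' a' μ hμ).2])
      have hker := hp x' x' a a' μ μ hμ hμ
      rw [ind_self, hlμ] at hker
      have hia := ind_le_one a a'
      have hia0 := ind_nonneg a a'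
      have hD2 : (0:ℝ) ≤ D / 2 := by linarith
      calc |∑ y, V y * (p x' a μ y - p x' a' μ y)| ≤ D / 2 * l1 (p x' a μ) (p x' a' μ) := hineq
        _ ≤ D / 2 * (K1 * (0 + 2 * ind a a' + 0)) := mul_le_mul_of_nonneg_left hker hD2
        _ ≤ 2 * (K1 * D / 2) := by
            nlinarith [mul_le_mul_of_nonneg_left hia (mul_nonneg hK1 hD0)]
    calc |(∑ y, V y * (∑ a, p x a μ y * u a)) - ∑ y, V y * (∑ a, p x' a μ y * u' a)|
        = |(∑ a, u a * (∑ y, V y * (p x a μ y - p x' a μ y)))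
            + ∑ a, (∑ y, V y * p x' a μ y) * (u a - u' a)| := by rw [hsplit]
      _ ≤ _ + _ := abs_add_le _ _
      _ ≤ K1 * D / 2 * ind x x' + K1 * D / 2 * l1 u u' := add_le_add h1 h2
      _ = K1 * D / 2 * (ind x x' + l1 u u') := by ring
  have hΩd : |Ω u - Ω u'| ≤ Lreg * l1 u u' := hΩ u u' hu hu'
  have hdecomp : ((∑ a, r x a μ * u a) - Ω u + β * ∑ y, V y * (∑ a, p x a μ y * u a)) -
      ((∑ a, r x' a μ * u' a) - Ω u' + β * ∑ y, V y * (∑ a, p x' a μ y * u' a))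
      = ((∑ a, r x a μ * u a) - ∑ a, r x' a μ * u' a) + (-(Ω u - Ω u'))
        + β * ((∑ y, V y * (∑ a, p x a μ y * u a)) - ∑ y, V y * (∑ a, p x' a μ y * u' a)) := by
    ring
  rw [hdecomp]
  have htri : |((∑ a, r x a μ * u a) - ∑ a, r x' a μ * u' a) + (-(Ω u - Ω u'))
        + β * ((∑ y, V y * (∑ a, p x a μ y * u a)) - ∑ y, V y * (∑ a, p x' a μ y * u' a))|
      ≤ |(∑ a, r x a μ * u a) - ∑ a, r x' a μ * u' a| + |Ω u - Ω u'|
        + β * |(∑ y, V y * (∑ a, p x a μ y * u a)) - ∑ y, V y * (∑ a, p x' a μ y * u' a)| := by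
    refine (abs_add_le _ _).trans (add_le_add ((abs_add_le _ _).trans ?_) ?_)
    · rw [abs_neg]
    · rw [abs_mul, abs_of_nonneg hβ0]
  refine htri.trans ?_
  have hVb := mul_le_mul_of_nonneg_left hV hβ0
  calc |(∑ a, r x a μ * u a) - ∑ a, r x' a μ * u' a| + |Ω u - Ω u'|
        + β * |(∑ y, V y * (∑ a, p x a μ y * u a)) - ∑ y, V y * (∑ a, p x' a μ y * u' a)|
      ≤ L1 * (ind x x' + l1 u u') + Lreg * l1 u u' + β * (K1 * D / 2 * (ind x x' + l1 u u')) := by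
        exact add_le_add (add_le_add hR hΩd) hVb
    _ = (L1 + β * K1 * D / 2) * (ind x x' + l1 u u') + Lreg * l1 u u' := by ring


/-- joint Lipschitz continuity of the optimal regularized
Q-function, with constant `Q_Lip + L_reg`. -/
theorem statement6 {X A : Type*} [Fintype X] [Fintype A] [Nonempty X] [Nonempty A]
    [DecidableEq X] [DecidableEq A]
    (r : X → A → (X → ℝ) → ℝ) (p : X → A → (X → ℝ) → X → ℝ)
    (L1 K1 : ℝ) (hL1 : 0 ≤ L1) (hK1 : 0 ≤ K1)
    (hr_nonneg : RewardNonneg r) (hr : RewardLip r L1)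
    (hp_prob : IsKernel p) (hp : KernelLip p K1)
    (Ω : (A → ℝ) → ℝ) (Lreg : ℝ) (hLreg : 0 ≤ Lreg) (hΩ : OmegaLip Ω Lreg)
    (β : ℝ) (hβ0 : 0 < β) (hβ1 : β < 1) (hβK : β * K1 / 2 < 1)
    (μ : X → ℝ) (hμ : IsProb μ)
    (Q : X → (A → ℝ) → ℝ) (hQ : BddFixedPoint r p Ω β μ Q) :
    ∀ x x' u u', IsProb u → IsProb u' →
      |Q x u - Q x' u'| ≤
        (L1 / (1 - β * K1 / 2) + Lreg) * (ind x x' + l1 u u') := by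
  obtain ⟨⟨C, hC⟩, hfix⟩ := hQ
  have hKpos : (0:ℝ) < 1 - β * K1 / 2 := by linarith
  -- uniform distribution, to make the simplex nonempty
  have hcard : (0:ℝ) < (Fintype.card A : ℝ) := by exact_mod_cast Fintype.card_pos
  have hu0 : IsProb (fun _ : A => (Fintype.card A : ℝ)⁻¹) := by
    constructor
    · intro a; positivity
    · simp [Finset.sum_const, Finset.card_univ, nsmul_eq_mul, mul_inv_cancel₀ hcard.ne']
  haveI : Nonempty {w : A → ℝ // IsProb w} := ⟨⟨_, hu0⟩⟩
  set V : X → ℝ := Qmax Q with hVdef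
  have hbdd : ∀ y, BddAbove (Set.range fun u : {w : A → ℝ // IsProb w} => Q y u.1) :=
    fun y => ⟨C, by rintro _ ⟨u, rfl⟩; exact (abs_le.mp (hC y u.1 u.2)).2⟩
  have hVdiff : ∀ (K : ℝ) (y y' : X),
      (∀ u : A → ℝ, IsProb u → |Q y u - Q y' u| ≤ K) → |V y - V y'| ≤ K := by
    intro K y y' h
    have haux : ∀ (z z' : X), (∀ u : A → ℝ, IsProb u → Q z u - Q z' u ≤ K) → V z - V z' ≤ K := by
      intro z z' hz
      rw [sub_le_iff_le_add, hVdef]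
      show (⨆ u : {w : A → ℝ // IsProb w}, Q z u.1) ≤ K + Qmax Q z'
      refine ciSup_le fun u => ?_
      have h1 : Q z u.1 ≤ Q z' u.1 + K := by linarith [hz u.1 u.2]
      have h2 : Q z' u.1 ≤ Qmax Q z' := le_ciSup (hbdd z') u
      linarith
    rw [abs_sub_le_iff]
    exact ⟨haux y y' fun u hu => (abs_le.mp (h u hu)).2,
      haux y' y fun u hu => by linarith [(abs_le.mp (h u hu)).1]⟩
  -- oscillation of V
  have hXne : (Finset.univ.image V).Nonempty :=
    ⟨V (Classical.arbitrary X), Finset.mem_image_of_mem _ (Finset.mem_univ _)⟩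
  set D := (Finset.univ.image V).max' hXne - (Finset.univ.image V).min' hXne with hDdef
  obtain ⟨ym, -, hym⟩ := Finset.mem_image.mp ((Finset.univ.image V).max'_mem hXne)
  obtain ⟨y0, -, hy0⟩ := Finset.mem_image.mp ((Finset.univ.image V).min'_mem hXne)
  have hub : ∀ y, V y ≤ (Finset.univ.image V).max' hXne :=
    fun y => Finset.le_max' _ _ (Finset.mem_image_of_mem _ (Finset.mem_univ y))
  have hlb : ∀ y, (Finset.univ.image V).min' hXne ≤ V y :=
    fun y => Finset.min'_le _ _ (Finset.mem_image_of_mem _ (Finset.mem_univ y))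
  have hD0 : 0 ≤ D := by have := hub y0; have := hlb y0; rw [hDdef]; linarith
  have hDV : ∀ y y', |V y - V y'| ≤ D := by
    intro y y'
    rw [abs_sub_le_iff, hDdef]
    constructor <;> [skip; skip] <;> [linarith [hub y, hlb y']; linarith [hub y', hlb y]]
  -- one-step Lipschitz estimate, applied through the fixed-point equation
  have happ : ∀ (y y' : X) (u u' : A → ℝ), IsProb u → IsProb u' →
      |Q y u - Q y' u'| ≤ (L1 + β * K1 * D / 2) * (ind y y' + l1 u u') + Lreg * l1 u u' := by
    intro y y' u u' hu hu'
    rw [hfix y u hu, hfix y' u' hu']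
    simp only [Lbell, ← hVdef]
    exact step r p L1 K1 hL1 hK1 hr hp_prob hp Ω Lreg hΩ β hβ0.le μ hμ V D hD0 hDV y y' u u' hu hu'
  -- the recursion bounding the oscillation
  have hrec : D ≤ L1 + β * K1 * D / 2 := by
    have hKu : ∀ u : A → ℝ, IsProb u → |Q ym u - Q y0 u| ≤ L1 + β * K1 * D / 2 := by
      intro u hu
      have h := happ ym y0 u u hu hu
      rw [l1_self] at h
      have hi1 := ind_le_one ym y0
      have hi0 := ind_nonneg ym y0
      have hc0 : 0 ≤ L1 + β * K1 * D / 2 := by nlinarith [mul_nonneg (mul_nonneg hβ0.le hK1) hD0]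
      nlinarith [mul_le_mul_of_nonneg_left hi1 hc0]
    have h := hVdiff _ ym y0 hKu
    calc D = V ym - V y0 := by rw [hDdef, hym, hy0]
      _ ≤ |V ym - V y0| := le_abs_self _
      _ ≤ _ := h
  set S := L1 / (1 - β * K1 / 2) with hSdef
  have hS : S * (1 - β * K1 / 2) = L1 := div_mul_cancel₀ _ hKpos.ne'
  have hD : D ≤ S := by
    rw [hSdef, le_div_iff₀ hKpos]
    nlinarith [hrec]
  have hcoef : L1 + β * K1 * D / 2 ≤ S := by
    nlinarith [mul_nonneg (mul_nonneg hβ0.le hK1) (sub_nonneg.2 hD)]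
  intro x x' u u' hu hu'
  have h := happ x x' u u' hu hu'
  have hl0 : 0 ≤ l1 u u' := l1_nonneg u u'
  have hi0 : 0 ≤ ind x x' := ind_nonneg x x'
  calc |Q x u - Q x' u'|
      ≤ (L1 + β * K1 * D / 2) * (ind x x' + l1 u u') + Lreg * l1 u u' := h
    _ ≤ S * (ind x x' + l1 u u') + Lreg * (ind x x' + l1 u u') := by
        have h1 := mul_le_mul_of_nonneg_right hcoef (by linarith : (0:ℝ) ≤ ind x x' + l1 u u')
        have h2 := mul_le_mul_of_nonneg_left (by linarith : l1 u u' ≤ ind x x' + l1 u u') hLreg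
        linarith
    _ = (S + Lreg) * (ind x x' + l1 u u') := by ring

end MFG
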